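/- For every s ∈ (1/2, 3/4) one has (V_0^2 ∘ H_0^2)(s, 3/4 − s) = (3/2 − s, s − 1/4), and for every u ∈ (3/4, 1) one has (V_0^2 ∘ H_0^2)(u, 5/4 − u) = (3/2 − u, u − 3/4) (all coordinates taken modulo 1). Consequently V_0^2 ∘ H_0^2 maps the segment {(s, 3/4 − s) : s ∈ (1/2, 3/4)} bijectively onto the segment {(u, 5/4 − u) : u ∈ (3/4, 1)} and vice versa, and every point of these two segments is a fixed point of (V_0^2 ∘ H_0^2)². -/

import Mathlib

/- 𝕋 = ℝ/ℤ, with d_𝕋 the quotient distance (norm of the difference in AddCircle 1). -/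
noncomputable section

abbrev T1 := AddCircle (1 : ℝ)

/-- The distance d_𝕋(x,y) = min{|x−y|, 1−|x−y|} on 𝕋. -/
noncomputable def dT (x y : T1) : ℝ := ‖x - y‖

/-- Horizontal wedge flow map H_ω^τ(x₁,x₂) = (x₁ + τ·d_𝕋(x₂,ω), x₂). -/
noncomputable def Hmap (ω : T1) (τ : ℝ) (p : T1 × T1) : T1 × T1 :=
  (p.1 + (↑(τ * dT p.2 ω) : T1), p.2)

/-- Vertical wedge flow map V_ω^τ(x₁,x₂) = (x₁, x₂ + τ·d_𝕋(x₁,ω)). -/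
noncomputable def Vmap (ω : T1) (τ : ℝ) (p : T1 × T1) : T1 × T1 :=
  (p.1, p.2 + (↑(τ * dT p.1 ω) : T1))

/-- The segment {(s, 3/4 − s) : s ∈ (1/2, 3/4)} ⊆ 𝕋². -/
def segC : Set (T1 × T1) :=
  {p | ∃ s ∈ Set.Ioo (1/2 : ℝ) (3/4), p = (((s : ℝ) : T1), ((3/4 - s : ℝ) : T1))}

/-- The segment {(u, 5/4 − u) : u ∈ (3/4, 1)} ⊆ 𝕋². -/
def segD : Set (T1 × T1) :=
  {p | ∃ u ∈ Set.Ioo (3/4 : ℝ) 1, p = (((u : ℝ) : T1), ((5/4 - u : ℝ) : T1))}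

/-! On the segment `segC` both wedge steps act affinely (the distances to `0` are `3/4 - s` and
then `s - 1/2`), and likewise on `segD`; in the parameter `s` of the antidiagonals the map
`V_0^2 ∘ H_0^2` becomes the reflection `s ↦ 3/2 - s`, an involution exchanging the parameter
intervals `(1/2, 3/4)` and `(3/4, 1)`. -/

open Set

lemma bijOn_image_of_eqOn_comp {α β : Type*} {f : β → β} {γ δ : α → β} {r : α → α}
    {A B : Set α} (hr : BijOn r A B) (hγ : InjOn γ A) (hδ : InjOn δ B)
    (h : EqOn (f ∘ γ) (δ ∘ r) A) : BijOn f (γ '' A) (δ '' B) :=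
  (bijOn_comp_iff hγ).1 ((hδ.bijOn_image.comp hr).congr h.symm)

lemma iterate_two_apply_of_eqOn_comp {α β : Type*} {f : β → β} {γ δ : α → β} {r : α → α}
    {A B : Set α} (hr : MapsTo r A B) (hinv : Function.Involutive r)
    (hγ : EqOn (f ∘ γ) (δ ∘ r) A) (hδ : EqOn (f ∘ δ) (γ ∘ r) B) {a : α} (ha : a ∈ A) :
    f^[2] (γ a) = γ a := by
  have h₁ := hγ ha
  have h₂ := hδ (hr ha)
  simp only [Function.comp_apply, hinv a] at h₁ h₂
  rw [Function.iterate_succ_apply', Function.iterate_one, h₁, h₂]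

lemma bijOn_const_sub_Ioo (a b c : ℝ) : BijOn (a - ·) (Ioo b c) (Ioo (a - c) (a - b)) := by
  rw [← image_const_sub_Ioo]
  exact (sub_right_injective (b := a)).injOn.bijOn_image

lemma coe_sub_intCast (x : ℝ) (n : ℤ) : ((x - n : ℝ) : T1) = x := by simp

lemma dT_coe_zero {x : ℝ} (n : ℤ) (h : |x - n| ≤ 1 / 2) : dT (x : T1) 0 = |x - n| := by
  rw [dT, sub_zero, ← coe_sub_intCast x n, AddCircle.norm_coe_eq_abs_iff _ one_ne_zero]
  simpa using h

lemma Hmap_zero_coe {x y : ℝ} (n : ℤ) (h : |y - n| ≤ 1 / 2) (τ : ℝ) :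
    Hmap 0 τ ((x : T1), (y : T1)) = (((x + τ * |y - n| : ℝ) : T1), (y : T1)) := by
  simp [Hmap, dT_coe_zero n h]

lemma Vmap_zero_coe {x y : ℝ} (n : ℤ) (h : |x - n| ≤ 1 / 2) (τ : ℝ) :
    Vmap 0 τ ((x : T1), (y : T1)) = ((x : T1), ((y + τ * |x - n| : ℝ) : T1)) := by
  simp [Vmap, dT_coe_zero n h]

def antidiag (c s : ℝ) : T1 × T1 := ((s : T1), ((c - s : ℝ) : T1))

lemma injOn_antidiag (c : ℝ) : InjOn (antidiag c) (Ico 0 1) := fun s hs t ht hst => by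
  have hst₁ := congrArg Prod.fst hst
  rwa [antidiag, antidiag, AddCircle.coe_eq_coe_iff_of_mem_Ico (a := 0)
    (by rwa [zero_add]) (by rwa [zero_add])] at hst₁

lemma segC_eq_image : segC = antidiag (3 / 4) '' Ioo (1 / 2) (3 / 4) := by
  ext; simp [segC, antidiag, eq_comm]

lemma segD_eq_image : segD = antidiag (5 / 4) '' Ioo (3 / 4) 1 := by
  ext; simp [segD, antidiag, eq_comm]

lemma wedge_apply_segC {s : ℝ} (hs : s ∈ Ioo (1 / 2 : ℝ) (3 / 4)) :
    (Vmap 0 2 ∘ Hmap 0 2) ((s : T1), ((3 / 4 - s : ℝ) : T1)) =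
      (((3 / 2 - s : ℝ) : T1), ((s - 1 / 4 : ℝ) : T1)) := by
  obtain ⟨hs₁, hs₂⟩ := hs
  have hy : |3 / 4 - s - (0 : ℤ)| = 3 / 4 - s := by
    rw [Int.cast_zero, sub_zero, abs_of_pos (by linarith)]
  have hx : |s + 2 * (3 / 4 - s) - (1 : ℤ)| = s - 1 / 2 := by
    rw [Int.cast_one, abs_of_neg (by linarith)]; ring
  rw [Function.comp_apply, Hmap_zero_coe 0 (by rw [hy]; linarith), hy,
    Vmap_zero_coe 1 (by rw [hx]; linarith), hx]
  congr 2 <;> ring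

lemma wedge_apply_segD {u : ℝ} (hu : u ∈ Ioo (3 / 4 : ℝ) 1) :
    (Vmap 0 2 ∘ Hmap 0 2) ((u : T1), ((5 / 4 - u : ℝ) : T1)) =
      (((3 / 2 - u : ℝ) : T1), ((u - 3 / 4 : ℝ) : T1)) := by
  obtain ⟨hu₁, hu₂⟩ := hu
  have hy : |5 / 4 - u - (0 : ℤ)| = 5 / 4 - u := by
    rw [Int.cast_zero, sub_zero, abs_of_pos (by linarith)]
  have hx : |u + 2 * (5 / 4 - u) - (2 : ℤ)| = u - 1 / 2 := by
    rw [Int.cast_two, abs_of_neg (by linarith)]; ring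
  rw [Function.comp_apply, Hmap_zero_coe 0 (by rw [hy]; linarith), hy,
    Vmap_zero_coe 2 (by rw [hx]; linarith), hx,
    ← coe_sub_intCast (u + 2 * (5 / 4 - u)) 1, ← coe_sub_intCast (5 / 4 - u + 2 * (u - 1 / 2)) 1]
  congr 2 <;> push_cast <;> ring

lemma bijOn_three_halves_sub : BijOn (3 / 2 - ·) (Ioo (1 / 2 : ℝ) (3 / 4)) (Ioo (3 / 4) 1) := by
  convert bijOn_const_sub_Ioo (3 / 2) (1 / 2) (3 / 4) using 2 <;> norm_num

lemma eqOn_wedge_comp_antidiag_three_quarters :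
    EqOn ((Vmap 0 2 ∘ Hmap 0 2) ∘ antidiag (3 / 4)) (antidiag (5 / 4) ∘ (3 / 2 - ·))
      (Ioo (1 / 2) (3 / 4)) := fun _ hs =>
  (wedge_apply_segC hs).trans (by rw [Function.comp_apply, antidiag]; congr 2; ring)

lemma eqOn_wedge_comp_antidiag_five_quarters :
    EqOn ((Vmap 0 2 ∘ Hmap 0 2) ∘ antidiag (5 / 4)) (antidiag (3 / 4) ∘ (3 / 2 - ·))
      (Ioo (3 / 4) 1) := fun _ hu =>
  (wedge_apply_segD hu).trans (by rw [Function.comp_apply, antidiag]; congr 2; ring)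

/-- (V_0^2 ∘ H_0^2)(s, 3/4−s) = (3/2−s, s−1/4) for s ∈ (1/2, 3/4) and
(V_0^2 ∘ H_0^2)(u, 5/4−u) = (3/2−u, u−3/4) for u ∈ (3/4, 1); consequently V_0^2 ∘ H_0^2
maps each of the two segments bijectively onto the other, and every point of these two
segments is a fixed point of (V_0^2 ∘ H_0^2)². -/
theorem wedge_tau2_antidiagonal_segments :
    (∀ s ∈ Set.Ioo (1/2 : ℝ) (3/4),
      (Vmap 0 2 ∘ Hmap 0 2) (((s : ℝ) : T1), ((3/4 - s : ℝ) : T1)) =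
        (((3/2 - s : ℝ) : T1), ((s - 1/4 : ℝ) : T1))) ∧
    (∀ u ∈ Set.Ioo (3/4 : ℝ) 1,
      (Vmap 0 2 ∘ Hmap 0 2) (((u : ℝ) : T1), ((5/4 - u : ℝ) : T1)) =
        (((3/2 - u : ℝ) : T1), ((u - 3/4 : ℝ) : T1))) ∧
    Set.BijOn (Vmap 0 2 ∘ Hmap 0 2) segC segD ∧
    Set.BijOn (Vmap 0 2 ∘ Hmap 0 2) segD segC ∧
    (∀ p ∈ segC ∪ segD, (Vmap 0 2 ∘ Hmap 0 2)^[2] p = p) := by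
  have hinvol : Function.Involutive (3 / 2 - · : ℝ → ℝ) := sub_sub_cancel _
  have hreflC := bijOn_three_halves_sub
  have hreflD : BijOn (3 / 2 - ·) (Ioo (3 / 4 : ℝ) 1) (Ioo (1 / 2) (3 / 4)) :=
    hreflC.symm ⟨fun x _ => hinvol x, fun x _ => hinvol x⟩
  have hinjC : InjOn (antidiag (3 / 4)) (Ioo (1 / 2) (3 / 4)) := (injOn_antidiag _).mono
    (Ioo_subset_Ico_self.trans (Ico_subset_Ico (by norm_num) (by norm_num)))
  have hinjD : InjOn (antidiag (5 / 4)) (Ioo (3 / 4) 1) := (injOn_antidiag _).mono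
    (Ioo_subset_Ico_self.trans (Ico_subset_Ico (by norm_num) le_rfl))
  rw [segC_eq_image, segD_eq_image]
  refine ⟨fun _ => wedge_apply_segC, fun _ => wedge_apply_segD,
    bijOn_image_of_eqOn_comp hreflC hinjC hinjD
      eqOn_wedge_comp_antidiag_three_quarters,
    bijOn_image_of_eqOn_comp hreflD hinjD hinjC
      eqOn_wedge_comp_antidiag_five_quarters, ?_⟩
  rintro _ (⟨s, hs, rfl⟩ | ⟨u, hu, rfl⟩)
  · exact iterate_two_apply_of_eqOn_comp hreflC.mapsTo hinvol
      eqOn_wedge_comp_antidiag_three_quarters eqOn_wedge_comp_antidiag_five_quarters hs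
  · exact iterate_two_apply_of_eqOn_comp hreflD.mapsTo hinvol
      eqOn_wedge_comp_antidiag_five_quarters eqOn_wedge_comp_antidiag_three_quarters hu
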